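/- arXiv:2509.18731 — 8 statements merged into one kernel-verified Lean document; each statement's English description precedes it below -/
import Mathlib

section
/- Let N be a finite set of cardinality n ≥ 1, fix an element n₀ ∈ N, and real numbers l_i, u_i for each i ∈ N with l_i < u_i. Define D(T) = ∏_{i∈T} l_i/(u_i − l_i) for T ⊆ N with n₀ ∉ T and |T| ≤ n−2 (with D(∅)=1), and D(T) = 0 otherwise. Then for every nonempty proper subset R ⊊ N with R ≠ {n₀} and R ≠ N\{n₀}, the following sum vanishes: ∑_{T ⊆ N, n₀ ∉ T, |T| ≤ n−2} (−1)^{n−|R|+|T|} (∏_{i ∈ T\R} u_i)(∏_{j ∈ (N\T)\R} l_j) · (∑_{T̂: T ⊆ T̂} D(T̂)) = 0. -/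
open Finset

/-- Product over `s \ R` rewritten as product of `if`s over `s`. -/
lemma prod_sdiff_ite {α : Type*} [DecidableEq α] (s R : Finset α) (h : α → ℝ) :
    ∏ i ∈ s \ R, h i = ∏ i ∈ s, (if i ∈ R then 1 else h i) := by
  rw [sdiff_eq_filter]
  rw [prod_filter]
  exact Finset.prod_congr rfl (fun i _ => by by_cases hi : i ∈ R <;> simp [hi])

/-- Alternating sum over a nonempty powerset vanishes (real version). -/
lemma sum_powerset_neg_one_pow_card_real {α : Type*} [DecidableEq α] {S : Finset α}
    (hS : S.Nonempty) : ∑ T ∈ S.powerset, (-1 : ℝ) ^ T.card = 0 := by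
  have h := Finset.prod_add (fun _ : α => (-1 : ℝ)) (fun _ => 1) S
  simp only [neg_add_cancel, prod_const, one_pow, mul_one] at h
  rw [zero_pow (by simpa [Finset.card_eq_zero, ← Finset.nonempty_iff_ne_empty] using hS.ne_empty)] at h
  exact h.symm

/-- Product of negations. -/
lemma prod_neg' {α : Type*} (s : Finset α) (f : α → ℝ) :
    ∏ i ∈ s, -f i = (-1 : ℝ) ^ s.card * ∏ i ∈ s, f i := by
  calc ∏ i ∈ s, -f i = ∏ i ∈ s, (-1 : ℝ) * f i := by simp
    _ = (∏ _i ∈ s, (-1 : ℝ)) * ∏ i ∈ s, f i := Finset.prod_mul_distrib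
    _ = (-1 : ℝ) ^ s.card * ∏ i ∈ s, f i := by rw [Finset.prod_const]

/-- The inner alternating sum over subsets of `T'`. -/
lemma inner_sum_eval {α : Type*} [DecidableEq α] (N R T' : Finset α) (l u : α → ℝ)
    (hT' : T' ⊆ N) :
    ∑ T ∈ T'.powerset, (-1 : ℝ) ^ T.card * (∏ i ∈ T \ R, u i) * (∏ j ∈ (N \ T) \ R, l j)
      = (∏ j ∈ (N \ T') \ R, l j) *
        ∏ i ∈ T', ((if i ∈ R then (1 : ℝ) else l i) - (if i ∈ R then 1 else u i)) := by
  have key : ∀ T ∈ T'.powerset,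
      (-1 : ℝ) ^ T.card * (∏ i ∈ T \ R, u i) * (∏ j ∈ (N \ T) \ R, l j)
        = (∏ j ∈ (N \ T') \ R, l j) *
          ((∏ i ∈ T, (-(if i ∈ R then (1 : ℝ) else u i))) *
            ∏ i ∈ T' \ T, (if i ∈ R then (1 : ℝ) else l i)) := by
    intro T hT
    rw [Finset.mem_powerset] at hT
    have hsplit : N \ T = (N \ T') ∪ (T' \ T) := by
      ext x
      simp only [Finset.mem_sdiff, Finset.mem_union]
      constructor
      · rintro ⟨hxN, hxT⟩
        by_cases hxT' : x ∈ T'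
        · exact Or.inr ⟨hxT', hxT⟩
        · exact Or.inl ⟨hxN, hxT'⟩
      · rintro (⟨hxN, hxT'⟩ | ⟨hxT', hxT⟩)
        · exact ⟨hxN, fun hx => hxT' (hT hx)⟩
        · exact ⟨hT' hxT', hxT⟩
    have hdisj : Disjoint (N \ T') (T' \ T) :=
      Finset.disjoint_of_subset_right (Finset.sdiff_subset) Finset.sdiff_disjoint
    have hsplit2 : (N \ T) \ R = ((N \ T') \ R) ∪ ((T' \ T) \ R) := by
      rw [hsplit, Finset.union_sdiff_distrib]
    have hdisj2 : Disjoint ((N \ T') \ R) ((T' \ T) \ R) :=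
      Finset.disjoint_of_subset_left Finset.sdiff_subset
        (Finset.disjoint_of_subset_right Finset.sdiff_subset hdisj)
    rw [hsplit2, Finset.prod_union hdisj2, prod_sdiff_ite T R u, prod_sdiff_ite (T' \ T) R l,
      prod_neg' T (fun i => if i ∈ R then (1 : ℝ) else u i)]
    ring
  rw [Finset.sum_congr rfl key, ← Finset.mul_sum]
  congr 1
  have := Finset.prod_add (fun i => -(if i ∈ R then (1 : ℝ) else u i))
    (fun i => (if i ∈ R then (1 : ℝ) else l i)) T'
  rw [← this]
  exact Finset.prod_congr rfl fun i _ => by ring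

theorem stmt_6 {α : Type*} [DecidableEq α] (N : Finset α) (n₀ : α)
    (hn₀ : n₀ ∈ N) (hN : 1 ≤ N.card) (l u : α → ℝ)
    (hlu : ∀ i ∈ N, l i < u i)
    (D : Finset α → ℝ)
    (hD : ∀ T : Finset α,
      D T = if n₀ ∉ T ∧ T.card ≤ N.card - 2 then ∏ i ∈ T, l i / (u i - l i) else 0)
    (R : Finset α) (hR : R ⊆ N) (hR₀ : R ≠ ∅) (hRN : R ≠ N)
    (hRn₀ : R ≠ {n₀}) (hRN' : R ≠ N \ {n₀}) :
    ∑ T ∈ N.powerset.filter (fun T => n₀ ∉ T ∧ T.card ≤ N.card - 2),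
      (-1 : ℝ) ^ (N.card - R.card + T.card)
        * (∏ i ∈ T \ R, u i) * (∏ j ∈ (N \ T) \ R, l j)
        * (∑ T' ∈ N.powerset.filter (fun T' => T ⊆ T'), D T') = 0 := by
  classical
  set n := N.card with hn
  set S : Finset α := N \ insert n₀ R with hS
  -- S has card ≤ n - 2
  have hins : insert n₀ R ⊆ N := Finset.insert_subset hn₀ hR
  have hins2 : 2 ≤ (insert n₀ R).card := by
    by_cases h : n₀ ∈ R
    · rw [Finset.insert_eq_self.mpr h]
      by_contra hc
      push_neg at hc
      have h1 : 1 ≤ R.card := Finset.card_pos.mpr (Finset.nonempty_iff_ne_empty.mpr hR₀)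
      have h2 : R.card = 1 := by omega
      obtain ⟨x, hx⟩ := Finset.card_eq_one.mp h2
      rw [hx, Finset.mem_singleton] at h
      exact hRn₀ (by rw [hx, h])
    · rw [Finset.card_insert_of_notMem h]
      have : 1 ≤ R.card := Finset.card_pos.mpr (Finset.nonempty_iff_ne_empty.mpr hR₀)
      omega
  have hScard : S.card ≤ n - 2 := by
    rw [hS, Finset.card_sdiff_of_subset hins]
    omega
  -- S is nonempty
  have hSne : S.Nonempty := by
    rw [Finset.nonempty_iff_ne_empty]
    intro hc
    have hsub : N ⊆ insert n₀ R := by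
      intro x hx
      by_contra hx'
      have : x ∈ S := Finset.mem_sdiff.mpr ⟨hx, hx'⟩
      rw [hc] at this; simp at this
    by_cases h : n₀ ∈ R
    · apply hRN
      apply Finset.Subset.antisymm hR
      intro x hx
      rcases Finset.mem_insert.mp (hsub hx) with h1 | h1
      · rw [h1]; exact h
      · exact h1
    · apply hRN'
      apply Finset.Subset.antisymm
      · intro x hx
        refine Finset.mem_sdiff.mpr ⟨hR hx, ?_⟩
        simp only [Finset.mem_singleton]
        rintro rfl; exact h hx
      · intro x hx
        rw [Finset.mem_sdiff, Finset.mem_singleton] at hx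
        rcases Finset.mem_insert.mp (hsub hx.1) with h1 | h1
        · exact absurd h1 hx.2
        · exact h1
  -- the property P
  set P : Finset α → Prop := fun T => n₀ ∉ T ∧ T.card ≤ n - 2 with hP
  have hPmono : ∀ T T' : Finset α, T ⊆ T' → P T' → P T := by
    intro T T' hTT' ⟨h1, h2⟩
    exact ⟨fun hc => h1 (hTT' hc), le_trans (Finset.card_le_card hTT') h2⟩
  -- Step 1: rewrite as double sum with indicators
  have step1 : ∑ T ∈ N.powerset.filter (fun T => n₀ ∉ T ∧ T.card ≤ n - 2),
      (-1 : ℝ) ^ (n - R.card + T.card)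
        * (∏ i ∈ T \ R, u i) * (∏ j ∈ (N \ T) \ R, l j)
        * (∑ T' ∈ N.powerset.filter (fun T' => T ⊆ T'), D T')
      = ∑ T ∈ N.powerset, ∑ T' ∈ N.powerset,
          if T ⊆ T' then (-1 : ℝ) ^ (n - R.card + T.card)
            * (∏ i ∈ T \ R, u i) * (∏ j ∈ (N \ T) \ R, l j) * D T' else 0 := by
    rw [Finset.sum_filter]
    apply Finset.sum_congr rfl
    intro T hT
    rw [Finset.mem_powerset] at hT
    rw [Finset.sum_filter, Finset.mul_sum]
    by_cases hPT : n₀ ∉ T ∧ T.card ≤ n - 2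
    · rw [if_pos hPT]
      apply Finset.sum_congr rfl
      intro T' _
      by_cases h : T ⊆ T' <;> simp [h]
    · rw [if_neg hPT]
      symm
      apply Finset.sum_eq_zero
      intro T' hT'
      rw [Finset.mem_powerset] at hT'
      by_cases h : T ⊆ T'
      · rw [if_pos h]
        have : D T' = 0 := by
          rw [hD T', if_neg]
          intro hc
          exact hPT (hPmono T T' h hc)
        rw [this, mul_zero]
      · rw [if_neg h]
  rw [step1, Finset.sum_comm]
  -- Step 2: inner sum over T for fixed T'
  have step2 : ∀ T' ∈ N.powerset, (∑ T ∈ N.powerset,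
      if T ⊆ T' then (-1 : ℝ) ^ (n - R.card + T.card)
        * (∏ i ∈ T \ R, u i) * (∏ j ∈ (N \ T) \ R, l j) * D T' else 0)
      = (if T' ⊆ S then (-1 : ℝ) ^ (n - R.card + T'.card) * ∏ j ∈ N \ R, l j else 0) := by
    intro T' hT'
    rw [Finset.mem_powerset] at hT'
    have hpows : ∑ T ∈ N.powerset,
        (if T ⊆ T' then (-1 : ℝ) ^ (n - R.card + T.card)
          * (∏ i ∈ T \ R, u i) * (∏ j ∈ (N \ T) \ R, l j) * D T' else 0)
        = ∑ T ∈ T'.powerset, (-1 : ℝ) ^ (n - R.card + T.card)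
          * (∏ i ∈ T \ R, u i) * (∏ j ∈ (N \ T) \ R, l j) * D T' := by
      rw [← Finset.sum_filter]
      apply Finset.sum_congr
      · ext T
        simp only [Finset.mem_filter, Finset.mem_powerset]
        exact ⟨fun h => h.2, fun h => ⟨h.trans hT', h⟩⟩
      · intro _ _; rfl
    rw [hpows]
    have hfact : ∀ T : Finset α, (-1 : ℝ) ^ (n - R.card + T.card)
          * (∏ i ∈ T \ R, u i) * (∏ j ∈ (N \ T) \ R, l j) * D T'
        = ((-1 : ℝ) ^ (n - R.card) * D T') *
          ((-1 : ℝ) ^ T.card * (∏ i ∈ T \ R, u i) * (∏ j ∈ (N \ T) \ R, l j)) := by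
      intro T
      rw [pow_add]
      ring
    rw [Finset.sum_congr rfl (fun T _ => hfact T), ← Finset.mul_sum,
      inner_sum_eval N R T' l u hT']
    by_cases hTS : T' ⊆ S
    · rw [if_pos hTS]
      -- in this case: n₀ ∉ T', T' ∩ R = ∅, card ≤ n - 2
      have hTn₀ : n₀ ∉ T' := fun hc => by
        have := hTS hc
        rw [hS, Finset.mem_sdiff] at this
        exact this.2 (Finset.mem_insert_self _ _)
      have hTR : ∀ i ∈ T', i ∉ R := by
        intro i hi hc
        have := hTS hi
        rw [hS, Finset.mem_sdiff] at this
        exact this.2 (Finset.mem_insert_of_mem hc)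
      have hTcard : T'.card ≤ n - 2 := le_trans (Finset.card_le_card hTS) hScard
      have hDT' : D T' = ∏ i ∈ T', l i / (u i - l i) := by
        rw [hD T', if_pos ⟨hTn₀, hTcard⟩]
      rw [hDT']
      have hprod : ∏ i ∈ T', ((if i ∈ R then (1 : ℝ) else l i) - (if i ∈ R then 1 else u i))
          = ∏ i ∈ T', (l i - u i) := by
        apply Finset.prod_congr rfl
        intro i hi
        rw [if_neg (hTR i hi), if_neg (hTR i hi)]
      rw [hprod]
      have hcomb : (∏ i ∈ T', l i / (u i - l i)) *
          ((∏ j ∈ (N \ T') \ R, l j) * ∏ i ∈ T', (l i - u i))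
          = (-1 : ℝ) ^ T'.card * ∏ j ∈ N \ R, l j := by
        have h1 : (∏ i ∈ T', l i / (u i - l i)) * (∏ i ∈ T', (l i - u i))
            = ∏ i ∈ T', (-(l i)) := by
          rw [← Finset.prod_mul_distrib]
          apply Finset.prod_congr rfl
          intro i hi
          have hne : u i - l i ≠ 0 := sub_ne_zero.mpr (ne_of_gt (hlu i (hT' hi)))
          field_simp
          ring
        have h2 : ∏ i ∈ T', (-(l i)) = (-1 : ℝ) ^ T'.card * ∏ i ∈ T', l i :=
          prod_neg' T' l
        have h3 : ((N \ T') \ R) ∪ T' = N \ R := by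
          ext x
          simp only [Finset.mem_union, Finset.mem_sdiff]
          constructor
          · rintro (⟨⟨h1, _⟩, h2⟩ | h1)
            · exact ⟨h1, h2⟩
            · exact ⟨hT' h1, fun hc => hTR x h1 hc⟩
          · rintro ⟨hxN, hxR⟩
            by_cases hx : x ∈ T'
            · exact Or.inr hx
            · exact Or.inl ⟨⟨hxN, hx⟩, hxR⟩
        have h4 : Disjoint ((N \ T') \ R) T' :=
          Finset.disjoint_of_subset_left Finset.sdiff_subset Finset.sdiff_disjoint
        have h5 : (∏ j ∈ (N \ T') \ R, l j) * ∏ i ∈ T', l i = ∏ j ∈ N \ R, l j := by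
          rw [← Finset.prod_union h4, h3]
        calc (∏ i ∈ T', l i / (u i - l i)) *
            ((∏ j ∈ (N \ T') \ R, l j) * ∏ i ∈ T', (l i - u i))
            = ((∏ i ∈ T', l i / (u i - l i)) * ∏ i ∈ T', (l i - u i)) *
              ∏ j ∈ (N \ T') \ R, l j := by ring
          _ = ((-1 : ℝ) ^ T'.card * ∏ i ∈ T', l i) * ∏ j ∈ (N \ T') \ R, l j := by
              rw [h1, h2]
          _ = (-1 : ℝ) ^ T'.card * ((∏ j ∈ (N \ T') \ R, l j) * ∏ i ∈ T', l i) := by ring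
          _ = (-1 : ℝ) ^ T'.card * ∏ j ∈ N \ R, l j := by rw [h5]
      rw [pow_add]
      calc (-1 : ℝ) ^ (n - R.card) * (∏ i ∈ T', l i / (u i - l i)) *
          ((∏ j ∈ (N \ T') \ R, l j) *
            ∏ i ∈ T', (l i - u i))
          = (-1 : ℝ) ^ (n - R.card) * ((∏ i ∈ T', l i / (u i - l i)) *
            ((∏ j ∈ (N \ T') \ R, l j) * ∏ i ∈ T', (l i - u i))) := by ring
        _ = (-1 : ℝ) ^ (n - R.card) * ((-1 : ℝ) ^ T'.card * ∏ j ∈ N \ R, l j) := by rw [hcomb]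
        _ = (-1 : ℝ) ^ (n - R.card) * (-1 : ℝ) ^ T'.card * ∏ j ∈ N \ R, l j := by ring
    · rw [if_neg hTS]
      -- either D T' = 0 or some i ∈ T' ∩ insert n₀ R
      by_cases hPT' : n₀ ∉ T' ∧ T'.card ≤ n - 2
      · -- then there is i ∈ T' ∩ R, so the product vanishes
        have : ∃ i ∈ T', i ∈ R := by
          by_contra hc
          push_neg at hc
          apply hTS
          intro x hx
          rw [hS, Finset.mem_sdiff]
          refine ⟨hT' hx, ?_⟩
          rw [Finset.mem_insert]
          rintro (rfl | hxR)
          · exact hPT'.1 hx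
          · exact hc x hx hxR
        obtain ⟨i, hiT', hiR⟩ := this
        have : ∏ i ∈ T', ((if i ∈ R then (1 : ℝ) else l i) - (if i ∈ R then 1 else u i)) = 0 := by
          apply Finset.prod_eq_zero hiT'
          rw [if_pos hiR, if_pos hiR, sub_self]
        rw [this, mul_zero, mul_zero]
      · have : D T' = 0 := by rw [hD T', if_neg hPT']
        rw [this, mul_zero, zero_mul]
  rw [Finset.sum_congr rfl step2]
  -- Step 3: final alternating sum
  have hfin : ∑ T' ∈ N.powerset,
      (if T' ⊆ S then (-1 : ℝ) ^ (n - R.card + T'.card) * ∏ j ∈ N \ R, l j else 0)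
      = ∑ T' ∈ S.powerset, (-1 : ℝ) ^ (n - R.card + T'.card) * ∏ j ∈ N \ R, l j := by
    rw [← Finset.sum_filter]
    apply Finset.sum_congr
    · ext T
      simp only [Finset.mem_filter, Finset.mem_powerset]
      have hSN : S ⊆ N := Finset.sdiff_subset
      exact ⟨fun h => h.2, fun h => ⟨h.trans hSN, h⟩⟩
    · intro _ _; rfl
  rw [hfin]
  have : ∑ T' ∈ S.powerset, (-1 : ℝ) ^ (n - R.card + T'.card) * ∏ j ∈ N \ R, l j
      = ((-1 : ℝ) ^ (n - R.card) * ∏ j ∈ N \ R, l j) *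
        ∑ T' ∈ S.powerset, (-1 : ℝ) ^ T'.card := by
    rw [Finset.mul_sum]
    apply Finset.sum_congr rfl
    intro T' _
    rw [pow_add]
    ring
  rw [this, sum_powerset_neg_one_pow_card_real hSne, mul_zero]
end

section
/- Let N = {1, 2, 3} and let 0 ≤ l_j ≤ u_j with l_j < u_j for j = 1,2,3. Consider real variables X_1, X_2, X_3, X_{12}, X_{13}, X_{23}, X_{123} satisfying: X_j ≥ l_j for j = 1,2,3; X_{12} ≥ l_1l_2, X_{13} ≥ l_1l_3, X_{23} ≥ l_2l_3; and the eight degree-3 linearized bound-factor inequalities obtained by expanding ∏_{i∈T}(u_i − x_i)∏_{j∈N\T}(x_j − l_j) ≥ 0 for each T ⊆ {1,2,3} and replacing each monomial x_{j_1}⋯x_{j_k} by X_{j_1⋯j_k}. Then X_{123} ≥ l_1 l_2 l_3. -/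
theorem stmt_10 (l₁ l₂ l₃ u₁ u₂ u₃ X₁ X₂ X₃ X₁₂ X₁₃ X₂₃ X₁₂₃ : ℝ)
    (hl₁ : 0 ≤ l₁) (hl₂ : 0 ≤ l₂) (hl₃ : 0 ≤ l₃)
    (h₁ : l₁ < u₁) (h₂ : l₂ < u₂) (h₃ : l₃ < u₃)
    (hX₁ : X₁ ≥ l₁) (hX₂ : X₂ ≥ l₂) (hX₃ : X₃ ≥ l₃)
    (hX₁₂ : X₁₂ ≥ l₁ * l₂) (hX₁₃ : X₁₃ ≥ l₁ * l₃) (hX₂₃ : X₂₃ ≥ l₂ * l₃)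
    (hF0 : l₂*l₃*X₁ + l₁*l₃*X₂ + l₁*l₂*X₃ - l₃*X₁₂ - l₂*X₁₃ - l₁*X₂₃ + X₁₂₃
      ≥ l₁*l₂*l₃)
    (hF1 : -(l₂*l₃)*X₁ - l₃*u₁*X₂ - l₂*u₁*X₃ + l₃*X₁₂ + l₂*X₁₃ + u₁*X₂₃ - X₁₂₃
      ≥ -(l₂*l₃*u₁))
    (hF2 : -(l₃*u₂)*X₁ - l₁*l₃*X₂ - l₁*u₂*X₃ + l₃*X₁₂ + u₂*X₁₃ + l₁*X₂₃ - X₁₂₃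
      ≥ -(l₁*l₃*u₂))
    (hF3 : -(l₂*u₃)*X₁ - l₁*u₃*X₂ - l₁*l₂*X₃ + u₃*X₁₂ + l₂*X₁₃ + l₁*X₂₃ - X₁₂₃
      ≥ -(l₁*l₂*u₃))
    (hF4 : l₃*u₂*X₁ + l₃*u₁*X₂ + u₁*u₂*X₃ - l₃*X₁₂ - u₂*X₁₃ - u₁*X₂₃ + X₁₂₃
      ≥ l₃*u₁*u₂)
    (hF5 : l₂*u₃*X₁ + u₁*u₃*X₂ + l₂*u₁*X₃ - u₃*X₁₂ - l₂*X₁₃ - u₁*X₂₃ + X₁₂₃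
      ≥ l₂*u₁*u₃)
    (hF6 : u₂*u₃*X₁ + l₁*u₃*X₂ + l₁*u₂*X₃ - u₃*X₁₂ - u₂*X₁₃ - l₁*X₂₃ + X₁₂₃
      ≥ l₁*u₂*u₃)
    (hF7 : -(u₂*u₃)*X₁ - u₁*u₃*X₂ - u₁*u₂*X₃ + u₃*X₁₂ + u₂*X₁₃ + u₁*X₂₃ - X₁₂₃
      ≥ -(u₁*u₂*u₃)) :
    X₁₂₃ ≥ l₁ * l₂ * l₃ := by
  have hu₁ : 0 < u₁ := lt_of_le_of_lt hl₁ h₁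
  have hu₂ : 0 < u₂ := lt_of_le_of_lt hl₂ h₂
  have key : (u₁ - l₁) * (u₂ - l₂) * (X₁₂₃ - l₃ * X₁₂) ≥ 0 := by
    nlinarith [mul_nonneg (mul_nonneg hu₁.le hu₂.le) (by linarith :
        l₂*l₃*X₁ + l₁*l₃*X₂ + l₁*l₂*X₃ - l₃*X₁₂ - l₂*X₁₃ - l₁*X₂₃ + X₁₂₃ - l₁*l₂*l₃ ≥ 0),
      mul_nonneg (mul_nonneg hl₁ hu₂.le) (by linarith :
        -(l₂*l₃)*X₁ - l₃*u₁*X₂ - l₂*u₁*X₃ + l₃*X₁₂ + l₂*X₁₃ + u₁*X₂₃ - X₁₂₃ + l₂*l₃*u₁ ≥ 0),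
      mul_nonneg (mul_nonneg hu₁.le hl₂) (by linarith :
        -(l₃*u₂)*X₁ - l₁*l₃*X₂ - l₁*u₂*X₃ + l₃*X₁₂ + u₂*X₁₃ + l₁*X₂₃ - X₁₂₃ + l₁*l₃*u₂ ≥ 0),
      mul_nonneg (mul_nonneg hl₁ hl₂) (by linarith :
        l₃*u₂*X₁ + l₃*u₁*X₂ + u₁*u₂*X₃ - l₃*X₁₂ - u₂*X₁₃ - u₁*X₂₃ + X₁₂₃ - l₃*u₁*u₂ ≥ 0)]
  have h12 : X₁₂₃ - l₃ * X₁₂ ≥ 0 := by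
    have hp : 0 < (u₁ - l₁) * (u₂ - l₂) := mul_pos (by linarith) (by linarith)
    nlinarith
  nlinarith [mul_nonneg hl₃ (by linarith : X₁₂ - l₁ * l₂ ≥ 0)]
end

section
/- Under the hypotheses of the degree-3 case with 0 ≤ l_j < u_j for j = 1,2,3, the linear combination of the constraints X_3 ≥ l_3 (weight l_1l_2), X_{12} ≥ l_1l_2 (weight l_3), the first bound-factor constraint F(∅) (weight 1 + l_1/(u_1−l_1) + l_2/(u_2−l_2)), F({1}) (weight l_1/(u_1−l_1)), and F({2}) (weight l_2/(u_2−l_2)) yields exactly the inequality X_{123} ≥ l_1l_2l_3: all coefficients of X_1, X_2, X_3, X_{12}, X_{13}, X_{23} cancel, the coefficient of X_{123} is 1, and the combined right-hand side is l_1l_2l_3. -/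
theorem stmt_11 (l₁ l₂ l₃ u₁ u₂ u₃ : ℝ)
    (hl₁ : 0 ≤ l₁) (hl₂ : 0 ≤ l₂) (hl₃ : 0 ≤ l₃)
    (h₁ : l₁ < u₁) (h₂ : l₂ < u₂) (h₃ : l₃ < u₃)
    (X₁ X₂ X₃ X₁₂ X₁₃ X₂₃ X₁₂₃ : ℝ) :
    (l₁*l₂) * (X₃ - l₃)
      + l₃ * (X₁₂ - l₁*l₂)
      + (1 + l₁/(u₁-l₁) + l₂/(u₂-l₂)) *
          ((l₂*l₃*X₁ + l₁*l₃*X₂ + l₁*l₂*X₃ - l₃*X₁₂ - l₂*X₁₃ - l₁*X₂₃ + X₁₂₃)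
            - l₁*l₂*l₃)
      + (l₁/(u₁-l₁)) *
          ((-(l₂*l₃)*X₁ - l₃*u₁*X₂ - l₂*u₁*X₃ + l₃*X₁₂ + l₂*X₁₃ + u₁*X₂₃ - X₁₂₃)
            - (-(l₂*l₃*u₁)))
      + (l₂/(u₂-l₂)) *
          ((-(l₃*u₂)*X₁ - l₁*l₃*X₂ - l₁*u₂*X₃ + l₃*X₁₂ + u₂*X₁₃ + l₁*X₂₃ - X₁₂₃)
            - (-(l₁*l₃*u₂)))
      = X₁₂₃ - l₁*l₂*l₃ := by
  have d1 : u₁ - l₁ ≠ 0 := sub_ne_zero.mpr h₁.ne'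
  have d2 : u₂ - l₂ ≠ 0 := sub_ne_zero.mpr h₂.ne'
  field_simp
  ring
end

section
/- Let N be a finite set of cardinality n ≥ 2, n₀ ∈ N a fixed element, and l_i, u_i ∈ ℝ with l_i < u_i for all i ∈ N. With D(T) = ∏_{i∈T} l_i/(u_i−l_i) for T ⊆ N\{n₀} with |T| ≤ n−2 (D(∅)=1) and D(T)=0 otherwise, and with F_T(R) = (−1)^{n−|R|+|T|} ∏_{i∈T\R} u_i ∏_{j∈(N\T)\R} l_j, the dual constraint for R = N is satisfied with right-hand side 1: ∑_{T ⊆ N\{n₀}, |T| ≤ n−2} F_T(N) · (∑_{T̂ ⊇ T} D(T̂)) = 1. -/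
lemma aux_sum_pow_real {α : Type*} [DecidableEq α] (x : Finset α) :
    (∑ m ∈ x.powerset, (-1 : ℝ) ^ m.card) = if x = ∅ then 1 else 0 := by
  have := @Finset.sum_powerset_neg_one_pow_card α _ x
  have h : ((∑ m ∈ x.powerset, (-1 : ℤ) ^ m.card : ℤ) : ℝ)
      = ∑ m ∈ x.powerset, (-1 : ℝ) ^ m.card := by push_cast; rfl
  rw [← h, this]
  split <;> simp

theorem stmt_15 {α : Type*} [DecidableEq α] (N : Finset α) (n₀ : α)
    (hn₀ : n₀ ∈ N) (hN : 2 ≤ N.card) (l u : α → ℝ)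
    (hlu : ∀ i ∈ N, l i < u i)
    (D : Finset α → ℝ)
    (hD : ∀ T : Finset α,
      D T = if n₀ ∉ T ∧ T.card ≤ N.card - 2 then ∏ i ∈ T, l i / (u i - l i) else 0) :
    ∑ T ∈ N.powerset.filter (fun T => n₀ ∉ T ∧ T.card ≤ N.card - 2),
      ((-1 : ℝ) ^ (N.card - N.card + T.card)
          * (∏ i ∈ T \ N, u i) * (∏ j ∈ (N \ T) \ N, l j))
        * (∑ T' ∈ N.powerset.filter (fun T' => T ⊆ T'), D T') = 1 := by
  classical
  set p : Finset α → Prop := fun T => n₀ ∉ T ∧ T.card ≤ N.card - 2 with hp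
  have key : ∑ T ∈ N.powerset.filter (fun T => n₀ ∉ T ∧ T.card ≤ N.card - 2),
      ((-1 : ℝ) ^ (N.card - N.card + T.card)
          * (∏ i ∈ T \ N, u i) * (∏ j ∈ (N \ T) \ N, l j))
        * (∑ T' ∈ N.powerset.filter (fun T' => T ⊆ T'), D T')
      = ∑ T ∈ N.powerset, ∑ T' ∈ N.powerset,
          if p T ∧ T ⊆ T' then (-1 : ℝ) ^ T.card * D T' else 0 := by
    rw [Finset.sum_filter]
    refine Finset.sum_congr rfl fun T hT => ?_
    rw [Finset.mem_powerset] at hT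
    by_cases hpT : p T
    · rw [if_pos hpT]
      have h1 : T \ N = ∅ := Finset.sdiff_eq_empty_iff_subset.2 hT
      have h2 : (N \ T) \ N = ∅ := Finset.sdiff_eq_empty_iff_subset.2 Finset.sdiff_subset
      rw [h1, h2, Nat.sub_self]
      simp only [Finset.prod_empty, mul_one, zero_add]
      rw [Finset.mul_sum, Finset.sum_filter]
      refine Finset.sum_congr rfl fun T' _ => ?_
      by_cases hTT : T ⊆ T'
      · rw [if_pos hTT, if_pos ⟨hpT, hTT⟩]
      · rw [if_neg hTT, if_neg (fun h => hTT h.2)]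
    · rw [if_neg hpT]
      refine (Finset.sum_eq_zero fun T' _ => ?_).symm
      simp [hpT]
  rw [key, Finset.sum_comm]
  have key2 : ∀ T' ∈ N.powerset,
      (∑ T ∈ N.powerset, if p T ∧ T ⊆ T' then (-1 : ℝ) ^ T.card * D T' else 0)
      = (if T' = ∅ then 1 else 0) * D T' := by
    intro T' hT'
    rw [Finset.mem_powerset] at hT'
    by_cases hpT' : p T'
    · have hf : ∀ T ∈ N.powerset, (if p T ∧ T ⊆ T' then (-1 : ℝ) ^ T.card * D T' else 0)
          = if T ⊆ T' then (-1 : ℝ) ^ T.card * D T' else 0 := by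
        intro T hT
        by_cases hTT : T ⊆ T'
        · have hpT : p T := ⟨fun h => hpT'.1 (hTT h), le_trans (Finset.card_le_card hTT) hpT'.2⟩
          rw [if_pos ⟨hpT, hTT⟩, if_pos hTT]
        · rw [if_neg (fun h => hTT h.2), if_neg hTT]
      rw [Finset.sum_congr rfl hf, ← Finset.sum_filter]
      have hpow : N.powerset.filter (fun T => T ⊆ T') = T'.powerset := by
        ext S
        simp only [Finset.mem_filter, Finset.mem_powerset]
        exact ⟨fun h => h.2, fun h => ⟨h.trans hT', h⟩⟩
      rw [hpow, ← Finset.sum_mul, aux_sum_pow_real]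
    · have : D T' = 0 := by rw [hD]; exact if_neg hpT'
      simp [this]
  rw [Finset.sum_congr rfl key2]
  simp only [ite_mul, one_mul, zero_mul]
  rw [Finset.sum_ite_eq' N.powerset (∅ : Finset α) D]
  simp only [Finset.empty_mem_powerset, if_pos]
  rw [hD]
  have h : n₀ ∉ (∅ : Finset α) ∧ (∅ : Finset α).card ≤ N.card - 2 := by simp
  simp [h]
end

section
/- Let N be a finite set of cardinality n ≥ 2, n₀ ∈ N fixed, and l_i, u_i ∈ ℝ with 0 ≤ l_i < u_i for all i. With D and F_T as in the dual construction (D(T) = ∏_{i∈T} l_i/(u_i−l_i) for T ⊆ N\{n₀}, |T| ≤ n−2, else 0; F_T(R) = (−1)^{n−|R|+|T|} ∏_{i∈T\R} u_i ∏_{j∈(N\T)\R} l_j), the dual constraint for R = {n₀} holds: ∏_{i∈N\{n₀}} l_i + ∑_{T ⊆ N\{n₀}, |T| ≤ n−2} F_T({n₀}) · (∑_{T̂ ⊇ T} D(T̂)) = 0. -/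
/-! With `M = N \ {n₀}`, the nonzero values of `D` sit on the proper subsets `T' ⊊ M`, so swapping
the double sum makes the coefficient of `D(T')` a signed sum over `T ⊆ T'`. By the binomial
expansion of `∏_{T'} (l_i - u_i)` that sum is `± ∏_{T'} (l_i - u_i) ∏_{M \ T'} l_i`, and the factor
`D(T') = ∏_{T'} l_i / (u_i - l_i)` turns it into `± (-1)^|T'| ∏_M l_i`. The alternating sum of
`(-1)^|T'|` over the proper subsets of the nonempty set `M` is `-(-1)^|M|`, which cancels the
leading `∏_M l_i`. -/

namespace Finset

variable {α : Type*}

theorem prod_sub_mul_prod_div_sub {K : Type*} [Field K] (t : Finset α) (f g : α → K)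
    (hfg : ∀ i ∈ t, f i ≠ g i) :
    (∏ i ∈ t, (g i - f i)) * ∏ i ∈ t, g i / (f i - g i) = (-1) ^ t.card * ∏ i ∈ t, g i := by
  rw [← prod_mul_distrib, ← prod_neg]
  refine prod_congr rfl fun i hi => ?_
  have : f i - g i ≠ 0 := sub_ne_zero.2 (hfg i hi)
  field_simp
  ring

variable [DecidableEq α]

theorem sum_ssubsets_neg_one_pow_card {R : Type*} [CommRing R] {s : Finset α}
    (hs : s.Nonempty) : ∑ t ∈ s.ssubsets, (-1 : R) ^ t.card = -(-1) ^ s.card := by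
  have hpow : ∑ t ∈ s.powerset, (-1 : R) ^ t.card = 0 := by
    exact_mod_cast congrArg (Int.cast : ℤ → R) (sum_powerset_neg_one_pow_card_of_nonempty hs)
  rw [ssubsets, sum_erase_eq_sub (mem_powerset_self s), hpow, zero_sub]

theorem filter_powerset_notMem_card_le_eq_ssubsets_erase {s : Finset α} {a : α}
    (ha : a ∈ s) (hs : 2 ≤ s.card) :
    s.powerset.filter (fun t => a ∉ t ∧ t.card ≤ s.card - 2) = (s.erase a).ssubsets := by
  have hcard := card_erase_of_mem ha
  ext t
  simp only [mem_filter, mem_powerset, mem_ssubsets]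
  constructor
  · rintro ⟨hts, hat, htcard⟩
    exact (subset_erase.2 ⟨hts, hat⟩).ssubset_of_ne (by rintro rfl; omega)
  · intro hsub
    have := card_lt_card hsub
    exact ⟨hsub.subset.trans (erase_subset a s), (subset_erase.1 hsub.subset).2, by omega⟩

theorem sum_ssubsets_mul_sum_superset {R : Type*} [CommSemiring R] (s : Finset α)
    (c w : Finset α → R) :
    ∑ t ∈ s.ssubsets, c t * ∑ t' ∈ s.ssubsets.filter (t ⊆ ·), w t' =
      ∑ t' ∈ s.ssubsets, (∑ t ∈ t'.powerset, c t) * w t' := by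
  simp_rw [mul_sum, sum_mul]
  refine sum_comm' fun t t' => ?_
  simp only [mem_filter, mem_ssubsets, mem_powerset]
  exact ⟨fun ⟨_, ht', htt'⟩ => ⟨htt', ht'⟩,
    fun ⟨htt', ht'⟩ => ⟨htt'.trans_ssubset ht', ht', htt'⟩⟩

theorem sum_powerset_neg_one_pow_mul_prod_mul_prod_sdiff {R : Type*} [CommRing R]
    {s t : Finset α} (hts : t ⊆ s) (f g : α → R) :
    ∑ r ∈ t.powerset, (-1) ^ r.card * (∏ i ∈ r, f i) * ∏ i ∈ s \ r, g i =
      (∏ i ∈ t, (g i - f i)) * ∏ i ∈ s \ t, g i := by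
  simp_rw [sub_eq_neg_add, prod_add, sum_mul]
  refine sum_congr rfl fun r hr => ?_
  have hsplit : s \ t ∪ t \ r = s \ r := sdiff_union_sdiff_cancel hts (mem_powerset.1 hr)
  rw [prod_neg, ← hsplit, prod_union (sdiff_disjoint.mono_right sdiff_subset)]
  ring

end Finset

open Finset

theorem stmt_16_general {α : Type*} [DecidableEq α] (N : Finset α) (n₀ : α)
    (hn₀ : n₀ ∈ N) (hN : 2 ≤ N.card) (l u : α → ℝ)
    (hlu : ∀ i ∈ N, l i < u i)
    (D : Finset α → ℝ)
    (hD : ∀ T : Finset α,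
      D T = if n₀ ∉ T ∧ T.card ≤ N.card - 2 then ∏ i ∈ T, l i / (u i - l i) else 0) :
    (∏ i ∈ N \ {n₀}, l i)
      + ∑ T ∈ N.powerset.filter (fun T => n₀ ∉ T ∧ T.card ≤ N.card - 2),
          ((-1 : ℝ) ^ (N.card - ({n₀} : Finset α).card + T.card)
              * (∏ i ∈ T \ {n₀}, u i) * (∏ j ∈ (N \ T) \ {n₀}, l j))
            * (∑ T' ∈ N.powerset.filter (fun T' => T ⊆ T'), D T') = 0 := by
  have hfamily := filter_powerset_notMem_card_le_eq_ssubsets_erase hn₀ hN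
  set M := N.erase n₀
  have hMcard : M.card = N.card - 1 := card_erase_of_mem hn₀
  have hinner (T : Finset α) : ∑ T' ∈ N.powerset.filter (T ⊆ ·), D T' =
      ∑ T' ∈ M.ssubsets.filter (T ⊆ ·), ∏ i ∈ T', l i / (u i - l i) := by
    simp_rw [hD, ← sum_filter, filter_comm, hfamily]
  have hcoef : ∀ T ∈ M.ssubsets,
      (-1 : ℝ) ^ (N.card - ({n₀} : Finset α).card + T.card)
          * (∏ i ∈ T \ {n₀}, u i) * (∏ j ∈ (N \ T) \ {n₀}, l j) =
        (-1) ^ M.card * ((-1) ^ T.card * (∏ i ∈ T, u i) * ∏ j ∈ M \ T, l j) := by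
    intro T hT
    have hn₀T : n₀ ∉ T := fun h => notMem_erase n₀ N ((mem_ssubsets.1 hT).subset h)
    rw [sdiff_singleton_eq_erase, sdiff_singleton_eq_erase, erase_eq_of_notMem hn₀T,
      ← erase_sdiff_comm, card_singleton, hMcard, pow_add]
    ring
  have hterm : ∀ T' ∈ M.ssubsets,
      (∑ T ∈ T'.powerset, (-1) ^ M.card * ((-1) ^ T.card * (∏ i ∈ T, u i) * ∏ j ∈ M \ T, l j))
          * ∏ i ∈ T', l i / (u i - l i) =
        (-1) ^ M.card * ((-1) ^ T'.card * ∏ i ∈ M, l i) := by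
    intro T' hT'
    have hT'M := (mem_ssubsets.1 hT').subset
    have hul : ∀ i ∈ T', u i ≠ l i := fun i hi => (hlu i (mem_of_mem_erase (hT'M hi))).ne'
    rw [← mul_sum, sum_powerset_neg_one_pow_mul_prod_mul_prod_sdiff hT'M, mul_assoc,
      mul_right_comm, prod_sub_mul_prod_div_sub T' u l hul,
      ← prod_sdiff hT'M]
    ring
  have hMne : M.Nonempty := by rw [← card_pos]; omega
  rw [hfamily, sum_congr rfl fun T hT => by rw [hcoef T hT, hinner T],
    sum_ssubsets_mul_sum_superset, sum_congr rfl hterm, ← mul_sum, ← sum_mul,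
    sum_ssubsets_neg_one_pow_card hMne, sdiff_singleton_eq_erase]
  have hsign : ((-1 : ℝ) ^ M.card) ^ 2 = 1 := by rw [← pow_mul, pow_mul', neg_one_sq, one_pow]
  linear_combination (-∏ i ∈ M, l i) * hsign

theorem stmt_16 {α : Type*} [DecidableEq α] (N : Finset α) (n₀ : α)
    (hn₀ : n₀ ∈ N) (hN : 2 ≤ N.card) (l u : α → ℝ)
    (hl : ∀ i ∈ N, 0 ≤ l i) (hlu : ∀ i ∈ N, l i < u i)
    (D : Finset α → ℝ)
    (hD : ∀ T : Finset α,
      D T = if n₀ ∉ T ∧ T.card ≤ N.card - 2 then ∏ i ∈ T, l i / (u i - l i) else 0) :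
    (∏ i ∈ N \ {n₀}, l i)
      + ∑ T ∈ N.powerset.filter (fun T => n₀ ∉ T ∧ T.card ≤ N.card - 2),
          ((-1 : ℝ) ^ (N.card - ({n₀} : Finset α).card + T.card)
              * (∏ i ∈ T \ {n₀}, u i) * (∏ j ∈ (N \ T) \ {n₀}, l j))
            * (∑ T' ∈ N.powerset.filter (fun T' => T ⊆ T'), D T') = 0 :=
  stmt_16_general N n₀ hn₀ hN l u hlu D hD
end

section
/- Let N be a finite set of cardinality n ≥ 2, n₀ ∈ N fixed, and l_i, u_i ∈ ℝ with 0 ≤ l_i < u_i. With D and F_T as in the dual construction, the dual constraint for R = N\{n₀} holds: l_{n₀} + ∑_{T ⊆ N\{n₀}, |T| ≤ n−2} F_T(N\{n₀}) · (∑_{T̂ ⊇ T} D(T̂)) = 0. -/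
theorem stmt_17 {α : Type*} [DecidableEq α] (N : Finset α) (n₀ : α)
    (hn₀ : n₀ ∈ N) (hN : 2 ≤ N.card) (l u : α → ℝ)
    (hl : ∀ i ∈ N, 0 ≤ l i) (hlu : ∀ i ∈ N, l i < u i)
    (D : Finset α → ℝ)
    (hD : ∀ T : Finset α,
      D T = if n₀ ∉ T ∧ T.card ≤ N.card - 2 then ∏ i ∈ T, l i / (u i - l i) else 0) :
    l n₀
      + ∑ T ∈ N.powerset.filter (fun T => n₀ ∉ T ∧ T.card ≤ N.card - 2),
          ((-1 : ℝ) ^ (N.card - (N \ {n₀}).card + T.card)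
              * (∏ i ∈ T \ (N \ {n₀}), u i) * (∏ j ∈ (N \ T) \ (N \ {n₀}), l j))
            * (∑ T' ∈ N.powerset.filter (fun T' => T ⊆ T'), D T') = 0 := by
  classical
  set P := N.powerset with hP
  set c : Finset α → Prop := fun T => n₀ ∉ T ∧ T.card ≤ N.card - 2 with hc
  set w : Finset α → ℝ := fun T => ∏ i ∈ T, l i / (u i - l i) with hw
  have hMcard : (N \ {n₀}).card = N.card - 1 := by
    rw [Finset.card_sdiff_of_subset (Finset.singleton_subset_iff.mpr hn₀), Finset.card_singleton]
  have hexp : N.card - (N \ {n₀}).card = 1 := by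
    rw [hMcard]; omega
  -- Step 1: simplify each summand
  have hterm : ∀ T ∈ P.filter c,
      ((-1 : ℝ) ^ (N.card - (N \ {n₀}).card + T.card)
          * (∏ i ∈ T \ (N \ {n₀}), u i) * (∏ j ∈ (N \ T) \ (N \ {n₀}), l j))
        * (∑ T' ∈ P.filter (fun T' => T ⊆ T'), D T')
      = l n₀ * ((-1 : ℝ) ^ (1 + T.card)
          * (∑ T' ∈ P.filter (fun T' => T ⊆ T'), D T')) := by
    intro T hT
    simp only [Finset.mem_filter, Finset.mem_powerset, hP, hc] at hT
    obtain ⟨hTN, hn₀T, hTc⟩ := hT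
    have h1 : T \ (N \ {n₀}) = ∅ := by
      rw [Finset.sdiff_eq_empty_iff_subset]
      refine Finset.subset_sdiff.mpr ⟨hTN, ?_⟩
      simp [Finset.disjoint_singleton_right, hn₀T]
    have h2 : (N \ T) \ (N \ {n₀}) = {n₀} := by
      ext x
      simp only [Finset.mem_sdiff, Finset.mem_singleton, not_and, not_not]
      constructor
      · rintro ⟨⟨hxN, hxT⟩, hx⟩
        exact hx hxN
      · rintro rfl
        exact ⟨⟨hn₀, hn₀T⟩, fun _ => rfl⟩
    rw [h1, h2, hexp]
    simp only [Finset.prod_empty, Finset.prod_singleton]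
    ring
  rw [Finset.sum_congr rfl hterm, ← Finset.mul_sum]
  -- Step 2: rewrite the inner sums using hD
  have hS : ∀ T : Finset α, (∑ T' ∈ P.filter (fun T' => T ⊆ T'), D T')
      = ∑ T' ∈ P, (if T ⊆ T' ∧ c T' then w T' else 0) := by
    intro T
    rw [Finset.sum_filter]
    refine Finset.sum_congr rfl fun T' _ => ?_
    rw [hD]
    by_cases h1 : T ⊆ T' <;> by_cases h2 : c T' <;>
      simp [h1, h2, hc, hw]
  -- Step 3: the key combinatorial identity
  have key : (∑ T ∈ P.filter c, (-1 : ℝ) ^ (1 + T.card)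
      * (∑ T' ∈ P.filter (fun T' => T ⊆ T'), D T')) = -1 := by
    have step1 : (∑ T ∈ P.filter c, (-1 : ℝ) ^ (1 + T.card)
        * (∑ T' ∈ P.filter (fun T' => T ⊆ T'), D T'))
        = ∑ T ∈ P, ∑ T' ∈ P,
            (if c T ∧ T ⊆ T' ∧ c T' then (-1 : ℝ) ^ (1 + T.card) * w T' else 0) := by
      rw [Finset.sum_filter]
      refine Finset.sum_congr rfl fun T _ => ?_
      by_cases hcT : c T
      · rw [if_pos hcT, hS T, Finset.mul_sum]
        refine Finset.sum_congr rfl fun T' _ => ?_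
        rw [mul_ite, mul_zero]
        exact if_congr (by tauto) rfl rfl
      · rw [if_neg hcT]
        symm
        refine Finset.sum_eq_zero fun T' _ => ?_
        rw [if_neg]
        tauto
    rw [step1, Finset.sum_comm]
    have hinner : ∀ T' ∈ P, (∑ T ∈ P,
        (if c T ∧ T ⊆ T' ∧ c T' then (-1 : ℝ) ^ (1 + T.card) * w T' else 0))
        = if T' = ∅ then -1 else 0 := by
      intro T' hT'
      rw [hP, Finset.mem_powerset] at hT'
      by_cases hcT' : c T'
      · have hcond : ∀ T : Finset α, (c T ∧ T ⊆ T' ∧ c T') ↔ T ⊆ T' := by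
          intro T
          constructor
          · exact fun h => h.2.1
          · intro h
            refine ⟨⟨fun hmem => hcT'.1 (h hmem), le_trans (Finset.card_le_card h) hcT'.2⟩,
              h, hcT'⟩
        simp only [hcond]
        rw [← Finset.sum_filter]
        have hfil : P.filter (fun T => T ⊆ T') = T'.powerset := by
          ext T
          simp only [Finset.mem_filter, Finset.mem_powerset, hP]
          exact ⟨fun h => h.2, fun h => ⟨h.trans hT', h⟩⟩
        rw [hfil]
        have hpow : (∑ T ∈ T'.powerset, (-1 : ℝ) ^ T.card)
            = if T' = ∅ then 1 else 0 := by
          have h := Finset.sum_powerset_neg_one_pow_card (x := T')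
          have h2 : ((∑ m ∈ T'.powerset, (-1 : ℤ) ^ m.card : ℤ) : ℝ)
              = ((if T' = ∅ then 1 else 0 : ℤ) : ℝ) := by exact_mod_cast h
          push_cast at h2
          convert h2 using 2 <;> split <;> push_cast <;> simp
        have : (∑ T ∈ T'.powerset, (-1 : ℝ) ^ (1 + T.card) * w T')
            = -((∑ T ∈ T'.powerset, (-1 : ℝ) ^ T.card) * w T') := by
          rw [← Finset.sum_mul, ← neg_mul]
          congr 1
          simp [pow_add]
        rw [this, hpow]
        by_cases he : T' = ∅
        · subst he; simp [hw]
        · simp [he]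
      · have hne : T' ≠ ∅ := by
          intro he; apply hcT'; subst he
          exact ⟨Finset.notMem_empty n₀, by simp⟩
        simp [hcT', hne]
    rw [Finset.sum_congr rfl hinner]
    rw [Finset.sum_ite_eq' P ∅ (fun _ => (-1 : ℝ))]
    simp [hP, Finset.empty_mem_powerset]
  rw [key]
  ring
end

section
/- Let N = {1,…,n} with n ≥ 2 and let 0 ≤ l_j < u_j for each j ∈ N. Suppose real numbers (X_R)_{R ⊆ N, R ≠ ∅} (with the convention X_∅ = 1) satisfy, for every pair of disjoint sets T, S with T ∪ S = N, the linearized bound-factor inequality ∑_{R ⊆ N} (−1)^{|T∩R|} (∏_{i∈T\R} u_i)(∏_{j∈S\R} (−l_j)) X_R ≥ 0, and suppose X_R ≥ ∏_{j∈R} l_j holds for all proper nonempty subsets R ⊊ N. Then X_N ≥ ∏_{j∈N} l_j. -/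
open Finset

section Aux

variable {α : Type*} [DecidableEq α]

private lemma sum_powerset_union_split (s t : Finset α) (h : Disjoint s t) (f : Finset α → ℝ) :
    ∑ A ∈ (s ∪ t).powerset, f A = ∑ A₁ ∈ s.powerset, ∑ A₂ ∈ t.powerset, f (A₁ ∪ A₂) := by
  rw [← Finset.sum_product']
  apply Finset.sum_bij' (i := fun A _ => (A ∩ s, A ∩ t)) (j := fun p _ => p.1 ∪ p.2)
  · intro A hA
    simp only [Finset.mem_product, Finset.mem_powerset]
    exact ⟨Finset.inter_subset_right, Finset.inter_subset_right⟩
  · intro p hp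
    simp only [Finset.mem_product, Finset.mem_powerset] at *
    exact Finset.union_subset_union hp.1 hp.2
  · intro A hA
    simp only [Finset.mem_powerset] at hA
    rw [← Finset.inter_union_distrib_left, Finset.inter_eq_left.2 hA]
  · intro p hp
    simp only [Finset.mem_product, Finset.mem_powerset] at hp
    have h1 : (p.1 ∪ p.2) ∩ s = p.1 := by
      ext x
      simp only [Finset.mem_inter, Finset.mem_union]
      constructor
      · rintro ⟨hx | hx, hxs⟩
        · exact hx
        · exact absurd (hp.2 hx) (Finset.disjoint_left.1 h hxs)
      · intro hx; exact ⟨Or.inl hx, hp.1 hx⟩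
    have h2 : (p.1 ∪ p.2) ∩ t = p.2 := by
      ext x
      simp only [Finset.mem_inter, Finset.mem_union]
      constructor
      · rintro ⟨hx | hx, hxt⟩
        · exact absurd (hp.1 hx) (Finset.disjoint_left.1 h · hxt)
        · exact hx
      · intro hx; exact ⟨Or.inr hx, hp.2 hx⟩
    exact Prod.ext h1 h2
  · intro A hA
    simp only [Finset.mem_powerset] at hA
    rw [← Finset.inter_union_distrib_left, Finset.inter_eq_left.2 hA]

private lemma alt_sum_powerset (W : Finset α) :
    ∑ A ∈ W.powerset, (-1 : ℝ) ^ ((W \ A).card) = if W = ∅ then 1 else 0 := by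
  have := Finset.prod_add (fun _ : α => (1:ℝ)) (fun _ => (-1:ℝ)) W
  simp only [Finset.prod_const, one_pow, one_mul] at this
  rw [← this]
  rcases eq_or_ne W ∅ with h | h
  · simp [h]
  · rw [if_neg h]
    have h0 : (1:ℝ) + -1 = 0 := by norm_num
    rw [h0, zero_pow (Finset.card_ne_zero.2 (Finset.nonempty_iff_ne_empty.2 h))]

private lemma prod_sub_expand (u l : α → ℝ) (T : Finset α) :
    ∑ A ∈ T.powerset, (∏ i ∈ T \ A, u i) * (∏ j ∈ A, (-(l j))) = ∏ i ∈ T, (u i - l i) := by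
  have := Finset.prod_add (fun j : α => (-(l j))) u T
  simp only [neg_add_eq_sub] at this
  rw [this]
  exact Finset.sum_congr rfl fun A _ => by ring

private lemma sum_cancel_expand (l : α → ℝ) (W : Finset α) :
    ∑ A ∈ W.powerset, (∏ j ∈ W \ A, l j) * (∏ j ∈ A, (-(l j)))
      = if W = ∅ then 1 else 0 := by
  have := Finset.prod_add (fun j : α => (-(l j))) l W
  simp only [neg_add_cancel] at this
  rw [Finset.prod_const] at this
  rcases eq_or_ne W ∅ with h | h
  · simp [h]
  · rw [if_neg h]
    rw [show (0:ℝ) = 0 ^ W.card from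
      (zero_pow (Finset.card_ne_zero.2 (Finset.nonempty_iff_ne_empty.2 h))).symm, this]
    exact Finset.sum_congr rfl fun A _ => by ring

private lemma double_sum_factor {β γ : Type*} (s : Finset β) (t : Finset γ)
    (f : β → ℝ) (g : γ → ℝ) (c : ℝ) :
    ∑ x ∈ s, ∑ y ∈ t, f x * g y * c = (∑ x ∈ s, f x) * (∑ y ∈ t, g y) * c :=
  calc ∑ x ∈ s, ∑ y ∈ t, f x * g y * c
      = ∑ x ∈ s, (∑ y ∈ t, f x * g y) * c :=
        Finset.sum_congr rfl fun x _ => (Finset.sum_mul _ _ _).symm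
    _ = (∑ x ∈ s, ∑ y ∈ t, f x * g y) * c := (Finset.sum_mul _ _ _).symm
    _ = (∑ x ∈ s, f x) * (∑ y ∈ t, g y) * c := by rw [Finset.sum_mul_sum]

private lemma aux_e1 (T R A₁ A₂ : Finset α) (h1 : A₁ ⊆ T ∩ R) (h2 : A₂ ⊆ T \ R) :
    (T \ (A₁ ∪ A₂)) ∩ R = (T ∩ R) \ A₁ := by
  ext x
  simp only [Finset.mem_inter, Finset.mem_sdiff, Finset.mem_union]
  have f1 : x ∈ A₁ → x ∈ T ∧ x ∈ R := fun h => Finset.mem_inter.1 (h1 h)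
  have f2 : x ∈ A₂ → x ∈ T ∧ x ∉ R := fun h => Finset.mem_sdiff.1 (h2 h)
  tauto

private lemma aux_e2 (T R A₁ A₂ : Finset α) (h1 : A₁ ⊆ T ∩ R) (h2 : A₂ ⊆ T \ R) :
    (T \ (A₁ ∪ A₂)) \ R = (T \ R) \ A₂ := by
  ext x
  simp only [Finset.mem_sdiff, Finset.mem_union]
  have f1 : x ∈ A₁ → x ∈ T ∧ x ∈ R := fun h => Finset.mem_inter.1 (h1 h)
  have f2 : x ∈ A₂ → x ∈ T ∧ x ∉ R := fun h => Finset.mem_sdiff.1 (h2 h)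
  tauto

private lemma aux_e3 (S T R A₁ A₂ : Finset α) (h1 : A₁ ⊆ T ∩ R) (h2 : A₂ ⊆ T \ R) :
    (S ∪ (A₁ ∪ A₂)) \ R = (S \ R) ∪ A₂ := by
  ext x
  simp only [Finset.mem_sdiff, Finset.mem_union]
  have f1 : x ∈ A₁ → x ∈ T ∧ x ∈ R := fun h => Finset.mem_inter.1 (h1 h)
  have f2 : x ∈ A₂ → x ∈ T ∧ x ∉ R := fun h => Finset.mem_sdiff.1 (h2 h)
  tauto

end Aux

theorem stmt_18 {α : Type*} [DecidableEq α] (N : Finset α) (hN : 2 ≤ N.card)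
    (l u : α → ℝ) (hl : ∀ j ∈ N, 0 ≤ l j) (hlu : ∀ j ∈ N, l j ≤ u j)
    (hlu' : ∀ j ∈ N, l j < u j)
    (X : Finset α → ℝ) (hXempty : X ∅ = 1)
    (hBF : ∀ T S : Finset α, Disjoint T S → T ∪ S = N →
      ∑ R ∈ N.powerset,
        (-1 : ℝ) ^ ((T ∩ R).card)
          * (∏ i ∈ T \ R, u i) * (∏ j ∈ S \ R, (-(l j))) * X R ≥ 0)
    (hlow : ∀ R : Finset α, R ⊆ N → R ≠ ∅ → R ≠ N → X R ≥ ∏ j ∈ R, l j) :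
    X N ≥ ∏ j ∈ N, l j := by
  classical
  -- the linearization of ∏_{j ∈ S} (x_j - l_j)
  -- Step 1: each such linearization is nonnegative, as a sum of full-degree constraints.
  have hLnonneg : ∀ S ⊆ N, 0 ≤ ∑ R ∈ S.powerset, (∏ j ∈ S \ R, (-(l j))) * X R := by
    intro S hS
    have hTS : Disjoint (N \ S) S := Finset.sdiff_disjoint
    have hpos : 0 < ∏ i ∈ N \ S, (u i - l i) :=
      Finset.prod_pos fun i hi => sub_pos.2 (hlu' i (Finset.mem_sdiff.1 hi).1)
    have key : (∏ i ∈ N \ S, (u i - l i)) * ∑ R ∈ S.powerset, (∏ j ∈ S \ R, (-(l j))) * X R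
        = ∑ A ∈ (N \ S).powerset, ∑ R ∈ N.powerset,
            (-1 : ℝ) ^ ((((N \ S) \ A) ∩ R).card)
              * (∏ i ∈ ((N \ S) \ A) \ R, u i)
              * (∏ j ∈ (S ∪ A) \ R, (-(l j))) * X R := by
      -- write both sides as sums over R ∈ N.powerset and compare coefficients
      rw [Finset.mul_sum, Finset.sum_comm]
      have hext : ∑ R ∈ S.powerset,
            (∏ i ∈ N \ S, (u i - l i)) * ((∏ j ∈ S \ R, (-(l j))) * X R)
          = ∑ R ∈ N.powerset,
            (if R ⊆ S then (∏ i ∈ N \ S, (u i - l i)) * ∏ j ∈ S \ R, (-(l j)) else 0) * X R := by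
        rw [← Finset.sum_subset (Finset.powerset_mono.2 hS)
          (fun R _ hR => by
            rw [if_neg (fun h => hR (Finset.mem_powerset.2 h)), zero_mul])]
        exact Finset.sum_congr rfl fun R hR => by
          rw [if_pos (Finset.mem_powerset.1 hR)]; ring
      rw [hext]
      refine Finset.sum_congr rfl fun R hR => ?_
      have hRN : R ⊆ N := Finset.mem_powerset.1 hR
      rw [← Finset.sum_mul]
      congr 1
      -- coefficient identity for fixed R
      have hdisj : Disjoint ((N \ S) ∩ R) ((N \ S) \ R) :=
        (Finset.sdiff_disjoint.symm).mono_left Finset.inter_subset_right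
      have hsplit : ((N \ S) ∩ R) ∪ ((N \ S) \ R) = N \ S := by
        ext x
        simp only [Finset.mem_union, Finset.mem_inter, Finset.mem_sdiff]
        tauto
      have hps : (N \ S).powerset = (((N \ S) ∩ R) ∪ ((N \ S) \ R)).powerset := by
        rw [hsplit]
      rw [hps, sum_powerset_union_split _ _ hdisj]
      have hstep : ∀ A₁ ∈ ((N \ S) ∩ R).powerset, ∀ A₂ ∈ ((N \ S) \ R).powerset,
          (-1 : ℝ) ^ ((((N \ S) \ (A₁ ∪ A₂)) ∩ R).card)
              * (∏ i ∈ ((N \ S) \ (A₁ ∪ A₂)) \ R, u i)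
              * (∏ j ∈ (S ∪ (A₁ ∪ A₂)) \ R, (-(l j)))
          = (-1 : ℝ) ^ ((((N \ S) ∩ R) \ A₁).card)
              * ((∏ i ∈ (((N \ S) \ R)) \ A₂, u i) * (∏ j ∈ A₂, (-(l j))))
              * (∏ j ∈ S \ R, (-(l j))) := by
        intro A₁ hA₁ A₂ hA₂
        have hA₁' : A₁ ⊆ (N \ S) ∩ R := Finset.mem_powerset.1 hA₁
        have hA₂' : A₂ ⊆ (N \ S) \ R := Finset.mem_powerset.1 hA₂
        rw [aux_e1 _ _ _ _ hA₁' hA₂', aux_e2 _ _ _ _ hA₁' hA₂',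
          aux_e3 S _ _ _ _ hA₁' hA₂']
        have hdSR : Disjoint (S \ R) A₂ := by
          refine Finset.disjoint_left.2 fun x hx hxA => ?_
          exact (Finset.mem_sdiff.1 ((Finset.mem_sdiff.1 (hA₂' hxA)).1)).2
            (Finset.mem_sdiff.1 hx).1
        rw [Finset.prod_union hdSR]
        ring
      rw [Finset.sum_congr rfl fun A₁ hA₁ =>
        Finset.sum_congr rfl fun A₂ hA₂ => hstep A₁ hA₁ A₂ hA₂]
      rw [double_sum_factor, alt_sum_powerset, prod_sub_expand]
      by_cases hRS : R ⊆ S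
      · have h1 : (N \ S) ∩ R = ∅ := by
          rw [← Finset.disjoint_iff_inter_eq_empty]
          exact Finset.sdiff_disjoint.mono_right hRS
        have h2 : (N \ S) \ R = N \ S :=
          sdiff_eq_self_iff_disjoint.2 (Finset.sdiff_disjoint.mono_right hRS).symm
        rw [if_pos hRS, h1, h2, if_pos rfl, one_mul]
      · obtain ⟨x, hxR, hxS⟩ := Finset.not_subset.1 hRS
        have h1 : (N \ S) ∩ R ≠ ∅ := by
          refine Finset.nonempty_iff_ne_empty.1 ⟨x, ?_⟩
          exact Finset.mem_inter.2 ⟨Finset.mem_sdiff.2 ⟨hRN hxR, hxS⟩, hxR⟩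
        rw [if_neg hRS, if_neg h1, zero_mul, zero_mul]
    have hterms : ∀ A ∈ (N \ S).powerset, (0:ℝ) ≤ ∑ R ∈ N.powerset,
        (-1 : ℝ) ^ ((((N \ S) \ A) ∩ R).card)
          * (∏ i ∈ ((N \ S) \ A) \ R, u i)
          * (∏ j ∈ (S ∪ A) \ R, (-(l j))) * X R := by
      intro A hA
      have hA' : A ⊆ N \ S := Finset.mem_powerset.1 hA
      have hd : Disjoint ((N \ S) \ A) (S ∪ A) :=
        Finset.disjoint_union_right.2
          ⟨hTS.mono_left Finset.sdiff_subset, Finset.sdiff_disjoint⟩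
      have hu : ((N \ S) \ A) ∪ (S ∪ A) = N := by
        ext x
        simp only [Finset.mem_union, Finset.mem_sdiff]
        have f1 : x ∈ A → x ∈ N ∧ x ∉ S := fun h => Finset.mem_sdiff.1 (hA' h)
        have f2 : x ∈ S → x ∈ N := fun h => hS h
        tauto
      exact hBF _ _ hd hu
    have hsum := Finset.sum_nonneg hterms
    rw [← key] at hsum
    exact nonneg_of_mul_nonneg_right hsum hpos
  -- Step 2: the expansion identity
  have hXN : X N = ∑ S ∈ N.powerset,
      (∏ j ∈ N \ S, l j) * ∑ R ∈ S.powerset, (∏ j ∈ S \ R, (-(l j))) * X R := by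
    symm
    have step1 : ∀ S ∈ N.powerset,
        (∏ j ∈ N \ S, l j) * ∑ R ∈ S.powerset, (∏ j ∈ S \ R, (-(l j))) * X R
          = ∑ R ∈ N.powerset,
            (if R ⊆ S then (∏ j ∈ N \ S, l j) * ∏ j ∈ S \ R, (-(l j)) else 0) * X R := by
      intro S hS
      rw [Finset.mul_sum]
      rw [← Finset.sum_subset (Finset.powerset_mono.2 (Finset.mem_powerset.1 hS))
        (fun R _ hR => by
          rw [if_neg (fun h => hR (Finset.mem_powerset.2 h)), zero_mul])]
      exact Finset.sum_congr rfl fun R hR => by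
        rw [if_pos (Finset.mem_powerset.1 hR)]; ring
    rw [Finset.sum_congr rfl step1, Finset.sum_comm]
    have step2 : ∀ R ∈ N.powerset,
        ∑ S ∈ N.powerset,
          (if R ⊆ S then (∏ j ∈ N \ S, l j) * ∏ j ∈ S \ R, (-(l j)) else 0) * X R
        = (if R = N then 1 else 0) * X R := by
      intro R hR
      have hRN : R ⊆ N := Finset.mem_powerset.1 hR
      rw [← Finset.sum_mul]
      congr 1
      have hps : N.powerset = (R ∪ (N \ R)).powerset := by
        rw [Finset.union_sdiff_of_subset hRN]
      rw [hps, sum_powerset_union_split R (N \ R) Finset.disjoint_sdiff]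
      have step3 : ∀ A₁ ∈ R.powerset, ∀ A₂ ∈ (N \ R).powerset,
          (if R ⊆ A₁ ∪ A₂ then (∏ j ∈ N \ (A₁ ∪ A₂), l j)
              * ∏ j ∈ (A₁ ∪ A₂) \ R, (-(l j)) else 0)
          = (if A₁ = R then (∏ j ∈ N \ (A₁ ∪ A₂), l j)
              * ∏ j ∈ (A₁ ∪ A₂) \ R, (-(l j)) else 0) := by
        intro A₁ hA₁ A₂ hA₂
        have hA₁' : A₁ ⊆ R := Finset.mem_powerset.1 hA₁
        have hA₂' : A₂ ⊆ N \ R := Finset.mem_powerset.1 hA₂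
        refine if_congr ⟨fun h => ?_, fun h => ?_⟩ rfl rfl
        · refine Finset.Subset.antisymm hA₁' fun x hx => ?_
          rcases Finset.mem_union.1 (h hx) with h' | h'
          · exact h'
          · exact absurd hx (Finset.mem_sdiff.1 (hA₂' h')).2
        · rw [h]; exact Finset.subset_union_left
      rw [Finset.sum_congr rfl fun A₁ hA₁ =>
        Finset.sum_congr rfl fun A₂ hA₂ => step3 A₁ hA₁ A₂ hA₂]
      rw [Finset.sum_comm]
      have step4 : ∀ A₂ ∈ (N \ R).powerset,
          ∑ A₁ ∈ R.powerset,
            (if A₁ = R then (∏ j ∈ N \ (A₁ ∪ A₂), l j)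
              * ∏ j ∈ (A₁ ∪ A₂) \ R, (-(l j)) else 0)
          = (∏ j ∈ (N \ R) \ A₂, l j) * ∏ j ∈ A₂, (-(l j)) := by
        intro A₂ hA₂
        have hA₂' : A₂ ⊆ N \ R := Finset.mem_powerset.1 hA₂
        rw [Finset.sum_ite_eq' R.powerset R
          (fun A₁ => (∏ j ∈ N \ (A₁ ∪ A₂), l j) * ∏ j ∈ (A₁ ∪ A₂) \ R, (-(l j))),
          if_pos (Finset.mem_powerset_self R)]
        have e1 : N \ (R ∪ A₂) = (N \ R) \ A₂ := by
          ext x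
          simp only [Finset.mem_sdiff, Finset.mem_union]
          tauto
        have e2 : (R ∪ A₂) \ R = A₂ :=
          Finset.union_sdiff_cancel_left (Finset.sdiff_disjoint.symm.mono_right hA₂')
        rw [e1, e2]
      rw [Finset.sum_congr rfl step4, sum_cancel_expand]
      have hcond : (N \ R = ∅) = (R = N) := by
        apply propext
        constructor
        · intro h
          exact Finset.Subset.antisymm hRN (Finset.sdiff_eq_empty_iff_subset.1 h)
        · intro h; rw [h, Finset.sdiff_self]
      simp only [hcond]
    rw [Finset.sum_congr rfl step2]
    simp only [ite_mul, one_mul, zero_mul]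
    rw [Finset.sum_ite_eq' N.powerset N X, if_pos (Finset.mem_powerset_self N)]
  -- Step 3: conclude
  have hterm : ∀ S ∈ N.powerset, (0:ℝ) ≤
      (∏ j ∈ N \ S, l j) * ∑ R ∈ S.powerset, (∏ j ∈ S \ R, (-(l j))) * X R := by
    intro S hS
    refine mul_nonneg (Finset.prod_nonneg fun j hj => hl j (Finset.mem_sdiff.1 hj).1)
      (hLnonneg S (Finset.mem_powerset.1 hS))
  have hsingle := Finset.single_le_sum hterm (Finset.empty_mem_powerset N)
  rw [← hXN] at hsingle
  have hempty : (∏ j ∈ N \ (∅ : Finset α), l j)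
      * ∑ R ∈ (∅ : Finset α).powerset, (∏ j ∈ (∅ : Finset α) \ R, (-(l j))) * X R
      = ∏ j ∈ N, l j := by
    simp [hXempty]
  rw [hempty] at hsingle
  exact hsingle
end

section
/- Let N = {1,…,n} with n ≥ 2 and 0 ≤ l_j ≤ u_j, l_j < u_j, for each j ∈ N. Suppose real numbers (X_R)_{R ⊆ N} with X_∅ = 1 satisfy all linearized bound-factor inequalities ∑_{R ⊆ N} (−1)^{|T∩R|} (∏_{i∈T\R} u_i)(∏_{j∈S\R}(−l_j)) X_R ≥ 0 for every partition N = T ⊔ S, and X_R ≤ ∏_{j∈R} u_j for all proper nonempty subsets R ⊊ N. Then X_N ≤ ∏_{j∈N} u_j. -/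
/-- Linearization of the bound-factor product `∏_{i∈T}(u_i - x_i) ∏_{j∈S}(x_j - l_j)`. -/
def stmt19G {α : Type*} [DecidableEq α] (l u : α → ℝ) (X : Finset α → ℝ)
    (T S : Finset α) : ℝ :=
  ∑ R ∈ (T ∪ S).powerset,
    (-1 : ℝ) ^ ((T ∩ R).card) * (∏ i ∈ T \ R, u i) * (∏ j ∈ S \ R, (-(l j))) * X R

/-- Linearization of `x_P · ∏_{j∈S}(x_j - l_j)`. -/
def stmt19V {α : Type*} [DecidableEq α] (l : α → ℝ) (X : Finset α → ℝ)
    (S P : Finset α) : ℝ :=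
  ∑ B ∈ S.powerset, (∏ j ∈ S \ B, (-(l j))) * X (P ∪ B)

lemma stmt19G_rec {α : Type*} [DecidableEq α] (l u : α → ℝ) (X : Finset α → ℝ)
    {a : α} {T S : Finset α} (haT : a ∉ T) (haS : a ∉ S) :
    (u a - l a) * stmt19G l u X T S =
      stmt19G l u X (insert a T) S + stmt19G l u X T (insert a S) := by
  have haTS : a ∉ T ∪ S := by simp [haT, haS]
  unfold stmt19G
  rw [show insert a T ∪ S = insert a (T ∪ S) by rw [Finset.insert_union],
      show T ∪ insert a S = insert a (T ∪ S) by rw [Finset.union_insert],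
      Finset.sum_powerset_insert haTS, Finset.sum_powerset_insert haTS,
      Finset.mul_sum]
  rw [add_add_add_comm, ← Finset.sum_add_distrib, ← Finset.sum_add_distrib,
    ← Finset.sum_add_distrib]
  refine Finset.sum_congr rfl fun B hB => ?_
  have hBsub : B ⊆ T ∪ S := Finset.mem_powerset.mp hB
  have haB : a ∉ B := fun h => haTS (hBsub h)
  have h1 : insert a T ∩ B = T ∩ B := Finset.insert_inter_of_notMem haB
  have h2 : insert a T \ B = insert a (T \ B) := by
    ext x
    simp only [Finset.mem_sdiff, Finset.mem_insert]
    constructor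
    · rintro ⟨rfl | hx, hxB⟩
      · exact Or.inl rfl
      · exact Or.inr ⟨hx, hxB⟩
    · rintro (rfl | ⟨hx, hxB⟩)
      · exact ⟨Or.inl rfl, haB⟩
      · exact ⟨Or.inr hx, hxB⟩
  have h3 : insert a T ∩ insert a B = insert a (T ∩ B) := by
    ext x
    simp only [Finset.mem_inter, Finset.mem_insert]
    tauto
  have h4 : insert a T \ insert a B = T \ B := by
    ext x
    simp only [Finset.mem_sdiff, Finset.mem_insert, not_or]
    constructor
    · rintro ⟨rfl | hx, hxa, hxB⟩
      · exact absurd rfl hxa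
      · exact ⟨hx, hxB⟩
    · rintro ⟨hx, hxB⟩
      exact ⟨Or.inr hx, fun h => haT (h ▸ hx), hxB⟩
  have h5 : S \ insert a B = S \ B := by
    ext x
    simp only [Finset.mem_sdiff, Finset.mem_insert, not_or]
    constructor
    · rintro ⟨hx, _, hxB⟩; exact ⟨hx, hxB⟩
    · rintro ⟨hx, hxB⟩; exact ⟨hx, fun h => haS (h ▸ hx), hxB⟩
  have h6 : insert a S \ B = insert a (S \ B) := by
    ext x
    simp only [Finset.mem_sdiff, Finset.mem_insert]
    constructor
    · rintro ⟨rfl | hx, hxB⟩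
      · exact Or.inl rfl
      · exact Or.inr ⟨hx, hxB⟩
    · rintro (rfl | ⟨hx, hxB⟩)
      · exact ⟨Or.inl rfl, haB⟩
      · exact ⟨Or.inr hx, hxB⟩
  have h7 : insert a S \ insert a B = S \ B := by
    ext x
    simp only [Finset.mem_sdiff, Finset.mem_insert, not_or]
    constructor
    · rintro ⟨rfl | hx, hxa, hxB⟩
      · exact absurd rfl hxa
      · exact ⟨hx, hxB⟩
    · rintro ⟨hx, hxB⟩
      exact ⟨Or.inr hx, fun h => haS (h ▸ hx), hxB⟩
  have h8 : T ∩ insert a B = T ∩ B := by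
    ext x
    simp only [Finset.mem_inter, Finset.mem_insert]
    constructor
    · rintro ⟨hx, rfl | hxB⟩
      · exact absurd hx haT
      · exact ⟨hx, hxB⟩
    · rintro ⟨hx, hxB⟩; exact ⟨hx, Or.inr hxB⟩
  have h9 : T \ insert a B = T \ B := by
    ext x
    simp only [Finset.mem_sdiff, Finset.mem_insert, not_or]
    constructor
    · rintro ⟨hx, _, hxB⟩; exact ⟨hx, hxB⟩
    · rintro ⟨hx, hxB⟩; exact ⟨hx, fun h => haT (h ▸ hx), hxB⟩
  have haTB : a ∉ T \ B := by simp [haT]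
  have haSB : a ∉ S \ B := by simp [haS]
  have haTiB : a ∉ T ∩ B := by simp [haT]
  rw [h1, h2, h3, h4, h5, h6, h7, h8, h9, Finset.prod_insert haTB,
    Finset.prod_insert haSB, Finset.card_insert_of_notMem haTiB, pow_succ]
  ring

lemma stmt19G_nonneg {α : Type*} [DecidableEq α] (N : Finset α) (l u : α → ℝ)
    (X : Finset α → ℝ) (hlu' : ∀ j ∈ N, l j < u j)
    (hBF : ∀ T S : Finset α, Disjoint T S → T ∪ S = N →
      ∑ R ∈ N.powerset,
        (-1 : ℝ) ^ ((T ∩ R).card)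
          * (∏ i ∈ T \ R, u i) * (∏ j ∈ S \ R, (-(l j))) * X R ≥ 0) :
    ∀ (k : ℕ) (T S : Finset α), Disjoint T S → T ∪ S ⊆ N →
      (N \ (T ∪ S)).card = k → 0 ≤ stmt19G l u X T S := by
  intro k
  induction k with
  | zero =>
    intro T S hd hsub hcard
    have hE : N \ (T ∪ S) = ∅ := Finset.card_eq_zero.mp hcard
    have hEq : T ∪ S = N :=
      Finset.Subset.antisymm hsub (Finset.sdiff_eq_empty_iff_subset.mp hE)
    have := hBF T S hd hEq
    unfold stmt19G
    rw [hEq]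
    exact this
  | succ k ih =>
    intro T S hd hsub hcard
    obtain ⟨a, ha⟩ : (N \ (T ∪ S)).Nonempty := Finset.card_pos.mp (by omega)
    have haN : a ∈ N := (Finset.mem_sdiff.mp ha).1
    have haTS : a ∉ T ∪ S := (Finset.mem_sdiff.mp ha).2
    have haT : a ∉ T := fun h => haTS (Finset.mem_union_left _ h)
    have haS : a ∉ S := fun h => haTS (Finset.mem_union_right _ h)
    have hcard' : ∀ U : Finset α, U = insert a (T ∪ S) → (N \ U).card = k := by
      intro U hU
      rw [hU, Finset.sdiff_insert, Finset.card_erase_of_mem ha, hcard]; omega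
    have h1 : 0 ≤ stmt19G l u X (insert a T) S := by
      refine ih (insert a T) S ?_ ?_ ?_
      · exact Finset.disjoint_insert_left.mpr ⟨haS, hd⟩
      · rw [Finset.insert_union]
        exact Finset.insert_subset haN hsub
      · exact hcard' _ (by rw [Finset.insert_union])
    have h2 : 0 ≤ stmt19G l u X T (insert a S) := by
      refine ih T (insert a S) ?_ ?_ ?_
      · exact Finset.disjoint_insert_right.mpr ⟨haT, hd⟩
      · rw [Finset.union_insert]
        exact Finset.insert_subset haN hsub
      · exact hcard' _ (by rw [Finset.union_insert])
    have hrec := stmt19G_rec l u X haT haS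
    have hpos : 0 < u a - l a := sub_pos.mpr (hlu' a haN)
    nlinarith [h1, h2]

lemma stmt19V_eq_G {α : Type*} [DecidableEq α] (l u : α → ℝ) (X : Finset α → ℝ)
    (S : Finset α) : stmt19V l X S ∅ = stmt19G l u X ∅ S := by
  simp [stmt19V, stmt19G]

lemma stmt19V_rec {α : Type*} [DecidableEq α] (l : α → ℝ) (X : Finset α → ℝ)
    {a : α} {S P : Finset α} (haS : a ∉ S) (haP : a ∉ P) :
    stmt19V l X S (insert a P) =
      stmt19V l X (insert a S) P + l a * stmt19V l X S P := by
  unfold stmt19V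
  rw [Finset.sum_powerset_insert haS, Finset.mul_sum, add_assoc,
    add_comm (∑ B ∈ S.powerset, (∏ j ∈ insert a S \ insert a B, (-(l j))) * X (P ∪ insert a B)),
    ← add_assoc, ← Finset.sum_add_distrib, ← Finset.sum_add_distrib]
  refine Finset.sum_congr rfl fun B hB => ?_
  have hBsub : B ⊆ S := Finset.mem_powerset.mp hB
  have haB : a ∉ B := fun h => haS (hBsub h)
  have h6 : insert a S \ B = insert a (S \ B) := by
    ext x
    simp only [Finset.mem_sdiff, Finset.mem_insert]
    constructor
    · rintro ⟨rfl | hx, hxB⟩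
      · exact Or.inl rfl
      · exact Or.inr ⟨hx, hxB⟩
    · rintro (rfl | ⟨hx, hxB⟩)
      · exact ⟨Or.inl rfl, haB⟩
      · exact ⟨Or.inr hx, hxB⟩
  have h7 : insert a S \ insert a B = S \ B := by
    ext x
    simp only [Finset.mem_sdiff, Finset.mem_insert, not_or]
    constructor
    · rintro ⟨rfl | hx, hxa, hxB⟩
      · exact absurd rfl hxa
      · exact ⟨hx, hxB⟩
    · rintro ⟨hx, hxB⟩
      exact ⟨Or.inr hx, fun h => haS (h ▸ hx), hxB⟩
  have hU1 : insert a P ∪ B = insert a (P ∪ B) := by rw [Finset.insert_union]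
  have hU2 : P ∪ insert a B = insert a (P ∪ B) := by rw [Finset.union_insert]
  have haSB : a ∉ S \ B := by simp [haS]
  rw [h6, h7, hU1, hU2, Finset.prod_insert haSB]
  ring

theorem stmt_19 {α : Type*} [DecidableEq α] (N : Finset α) (hN : 2 ≤ N.card)
    (l u : α → ℝ) (hl : ∀ j ∈ N, 0 ≤ l j) (hlu : ∀ j ∈ N, l j ≤ u j)
    (hlu' : ∀ j ∈ N, l j < u j)
    (X : Finset α → ℝ) (hXempty : X ∅ = 1)
    (hBF : ∀ T S : Finset α, Disjoint T S → T ∪ S = N →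
      ∑ R ∈ N.powerset,
        (-1 : ℝ) ^ ((T ∩ R).card)
          * (∏ i ∈ T \ R, u i) * (∏ j ∈ S \ R, (-(l j))) * X R ≥ 0)
    (hupp : ∀ R : Finset α, R ⊆ N → R ≠ ∅ → R ≠ N → X R ≤ ∏ j ∈ R, u j) :
    X N ≤ ∏ j ∈ N, u j := by
  have hGnn := stmt19G_nonneg N l u X hlu' hBF
  -- nonnegativity of V S ∅ for S ⊆ N
  have hVnn : ∀ S : Finset α, S ⊆ N → 0 ≤ stmt19V l X S ∅ := by
    intro S hS
    rw [stmt19V_eq_G l u]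
    exact hGnn _ ∅ S (Finset.disjoint_left.mpr (by simp)) (by simpa using hS) rfl
  -- the key one-variable inequality
  have hWrec : ∀ (a : α) (S : Finset α), a ∈ N → a ∉ S → S ⊆ N →
      stmt19V l X (insert a S) ∅ ≤ (u a - l a) * stmt19V l X S ∅ := by
    intro a S haN haS hS
    rw [stmt19V_eq_G l u, stmt19V_eq_G l u]
    have hrec := stmt19G_rec l u X (T := ∅) (S := S) (a := a) (by simp) haS
    have h1 : 0 ≤ stmt19G l u X (insert a ∅) S := by
      refine hGnn _ (insert a ∅) S ?_ ?_ rfl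
      · simp [Finset.disjoint_left, haS]
      · simpa using Finset.insert_subset haN hS
    linarith [hrec]
  -- main induction
  have hU : ∀ (n : ℕ) (P S : Finset α), P.card = n → Disjoint S P → S ∪ P ⊆ N →
      stmt19V l X S P ≤ (∏ j ∈ P, u j) * stmt19V l X S ∅ := by
    intro n
    induction n with
    | zero =>
      intro P S hcard _ _
      rw [Finset.card_eq_zero.mp hcard]
      simp
    | succ n ih =>
      intro P S hcard hd hsub
      obtain ⟨a, haP⟩ : P.Nonempty := Finset.card_pos.mp (by omega)
      set P' := P.erase a with hP'def
      have hPins : insert a P' = P := Finset.insert_erase haP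
      have haP' : a ∉ P' := Finset.notMem_erase a P
      have hP'card : P'.card = n := by
        rw [hP'def, Finset.card_erase_of_mem haP, hcard]; omega
      have haN : a ∈ N := hsub (Finset.mem_union_right _ haP)
      have haS : a ∉ S := Finset.disjoint_right.mp hd haP
      have hSsub : S ⊆ N := fun x hx => hsub (Finset.mem_union_left _ hx)
      have hP'sub : P' ⊆ N := fun x hx =>
        hsub (Finset.mem_union_right _ (Finset.erase_subset _ _ hx))
      have hdSP' : Disjoint S P' :=
        Finset.disjoint_of_subset_right (Finset.erase_subset _ _) hd
      have ih1 : stmt19V l X (insert a S) P' ≤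
          (∏ j ∈ P', u j) * stmt19V l X (insert a S) ∅ := by
        refine ih P' (insert a S) hP'card ?_ ?_
        · exact Finset.disjoint_insert_left.mpr ⟨haP', hdSP'⟩
        · rw [Finset.insert_union]
          exact Finset.insert_subset haN (Finset.union_subset hSsub hP'sub)
      have ih2 : stmt19V l X S P' ≤ (∏ j ∈ P', u j) * stmt19V l X S ∅ :=
        ih P' S hP'card hdSP' (Finset.union_subset hSsub hP'sub)
      have hprodnn : 0 ≤ ∏ j ∈ P', u j :=
        Finset.prod_nonneg fun j hj =>
          le_trans (hl j (hP'sub hj)) (hlu j (hP'sub hj))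
      have hla : 0 ≤ l a := hl a haN
      have hw := hWrec a S haN haS hSsub
      have hVS : 0 ≤ stmt19V l X S ∅ := hVnn S hSsub
      calc stmt19V l X S P = stmt19V l X S (insert a P') := by rw [hPins]
        _ = stmt19V l X (insert a S) P' + l a * stmt19V l X S P' :=
            stmt19V_rec l X haS haP'
        _ ≤ (∏ j ∈ P', u j) * stmt19V l X (insert a S) ∅
              + l a * ((∏ j ∈ P', u j) * stmt19V l X S ∅) :=
            add_le_add ih1 (mul_le_mul_of_nonneg_left ih2 hla)
        _ ≤ (∏ j ∈ P', u j) * ((u a - l a) * stmt19V l X S ∅)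
              + l a * ((∏ j ∈ P', u j) * stmt19V l X S ∅) := by
            have := mul_le_mul_of_nonneg_left hw hprodnn
            linarith
        _ = (∏ j ∈ P, u j) * stmt19V l X S ∅ := by
            rw [← hPins, Finset.prod_insert haP']
            ring
  have hXN : stmt19V l X ∅ N = X N := by simp [stmt19V]
  have hX0 : stmt19V l X ∅ ∅ = X ∅ := by simp [stmt19V]
  have := hU N.card N ∅ rfl (by simp) (by simp)
  rw [hXN, hX0, hXempty, mul_one] at this
  exact this
end
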